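/- Let Z be a compact Hausdorff space and h_1, …, h_k : Z → Z pairwise commuting surjective local homeomorphisms, with β_{c_i} := limsup_{j→∞} j^{-1} ln( max_{z∈Z} |h_i^{-j}(z)| ), and assume β_{c_i} > 0 for all i. Set r := (β_{c_1}, …, β_{c_k}), and suppose u ∈ Z satisfies |h_1^{-d}(u)| ≥ e^{d β_{c_1}} for every d ∈ ℕ. Then for every β > 1, the sum f_β(u) := Σ_{n∈ℕ^k} e^{-β r·n} |h^{-n}(u)| (taken in [0,∞]) satisfies f_β(u) ≥ (1 − e^{(1−β) β_{c_1}})^{-1} · Π_{i=2}^k (1 − e^{-β β_{c_i}})^{-1}. Consequently f_β(u) → ∞ as β decreases to 1. -/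

import Mathlib

/-!
Surjectivity of the other maps makes the fibre of `h^n` over `u` at least as large as that of
`h_1^{n_1}`, so by the hypothesis on `u` each term of `f_β(u)` dominates
`e^{(1-β) β_{c_1} n_1} ∏_{i ≥ 2} e^{-β β_{c_i} n_i}`. Summed over `ℕ^k` this is a product of
geometric series, which is the stated bound. As `β ↓ 1` its first factor blows up, while each
of the others stays at least `1`.
-/

open Filter

/-- `h^m = h 0 ^[m 0] ∘ ⋯ ∘ h (k-1) ^[m (k-1)]`. -/
def compIter {Z : Type*} {k : ℕ} (h : Fin k → Z → Z) (m : Fin k → ℕ) : Z → Z :=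
  (List.ofFn fun i => (h i)^[m i]).foldr (· ∘ ·) id

/-- The critical inverse temperature
`β_c = limsup_{j→∞} j⁻¹ ln (max_z |f^{-j}(z)|)` of a map `f : Z → Z`. -/
noncomputable def betaC {Z : Type*} (f : Z → Z) : ℝ :=
  Filter.limsup
    (fun j : ℕ => Real.log (⨆ z : Z, (Nat.card ((f^[j]) ⁻¹' {z}) : ℝ)) / j)
    Filter.atTop

open Function Real Topology
open scoped ENNReal

theorem IsLocallyInjective.isDiscrete_preimage_singleton {X Y : Type*} [TopologicalSpace X]
    {f : X → Y} (hf : IsLocallyInjective f) (y : Y) : IsDiscrete (f ⁻¹' {y}) := by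
  refine isDiscrete_iff_forall_mem_exists_isOpen.2 fun x hx => ?_
  obtain ⟨U, hUo, hxU, hinj⟩ := hf x
  refine ⟨U, hUo, Set.Subset.antisymm (fun x' ⟨hx'U, hx'⟩ => ?_) (by simpa using ⟨hxU, hx⟩)⟩
  exact hinj hx'U hxU (hx'.trans hx.symm)

theorem IsLocalHomeomorph.finite_preimage_singleton {X Y : Type*} [TopologicalSpace X]
    [TopologicalSpace Y] [CompactSpace X] [T1Space Y] {f : X → Y} (hf : IsLocalHomeomorph f)
    (y : Y) : (f ⁻¹' {y}).Finite :=
  (isClosed_singleton.preimage hf.continuous).isCompact.finite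
    (hf.isLocallyInjective.isDiscrete_preimage_singleton y)

theorem IsLocalHomeomorph.iterate {X : Type*} [TopologicalSpace X] {f : X → X}
    (hf : IsLocalHomeomorph f) (n : ℕ) : IsLocalHomeomorph f^[n] := by
  induction n with
  | zero => exact (Homeomorph.refl X).isLocalHomeomorph
  | succ n ih => exact ih.comp hf

theorem Function.Surjective.card_le_card_preimage {X Y : Type*} {g : X → Y} (hg : Surjective g)
    {s : Set Y} (hs : (g ⁻¹' s).Finite) : Nat.card s ≤ Nat.card (g ⁻¹' s) := by
  simp only [Nat.card_coe_set_eq]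
  calc s.ncard = (g '' (g ⁻¹' s)).ncard := by rw [Set.image_preimage_eq s hg]
    _ ≤ (g ⁻¹' s).ncard := Set.ncard_image_le hs

section compIter

variable {Z : Type*}

theorem compIter_fin_succ {k : ℕ} (h : Fin (k + 1) → Z → Z) (n : Fin (k + 1) → ℕ) :
    compIter h n = (h 0)^[n 0] ∘ compIter (Fin.tail h) (Fin.tail n) := by
  rw [compIter, List.ofFn_succ, List.foldr_cons]
  rfl

theorem compIter_surjective {k : ℕ} {h : Fin k → Z → Z} (hh : ∀ i, Surjective (h i))
    (n : Fin k → ℕ) : Surjective (compIter h n) := by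
  induction k with
  | zero => exact surjective_id
  | succ k ih =>
    rw [compIter_fin_succ]
    exact ((hh 0).iterate _).comp (ih (fun i => hh i.succ) _)

theorem isLocalHomeomorph_compIter [TopologicalSpace Z] {k : ℕ} {h : Fin k → Z → Z}
    (hh : ∀ i, IsLocalHomeomorph (h i)) (n : Fin k → ℕ) : IsLocalHomeomorph (compIter h n) := by
  induction k with
  | zero => exact (Homeomorph.refl Z).isLocalHomeomorph
  | succ k ih =>
    rw [compIter_fin_succ]
    exact ((hh 0).iterate _).comp (ih (fun i => hh i.succ) _)

theorem card_preimage_iterate_le_card_preimage_compIter [TopologicalSpace Z] [CompactSpace Z]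
    [T1Space Z] {k : ℕ} [NeZero k] {h : Fin k → Z → Z} (hlh : ∀ i, IsLocalHomeomorph (h i))
    (hsurj : ∀ i, Surjective (h i)) (n : Fin k → ℕ) (u : Z) :
    Nat.card ((h 0)^[n 0] ⁻¹' {u}) ≤ Nat.card (compIter h n ⁻¹' {u}) := by
  obtain ⟨k, rfl⟩ := Nat.exists_eq_succ_of_ne_zero (NeZero.ne k)
  have hfin := (isLocalHomeomorph_compIter hlh n).finite_preimage_singleton u
  rw [compIter_fin_succ] at hfin ⊢
  exact (compIter_surjective (fun i => hsurj i.succ) _).card_le_card_preimage hfin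

end compIter

theorem ENNReal.tsum_pi_prod {ι κ : Type*} [Fintype ι] (f : ι → κ → ℝ≥0∞) :
    ∑' n : ι → κ, ∏ i, f i (n i) = ∏ i, ∑' j, f i j := by
  revert f
  refine Fintype.induction_empty_option
    (P := fun α _ => ∀ f : α → κ → ℝ≥0∞, ∑' n : α → κ, ∏ i, f i (n i) = ∏ i, ∑' j, f i j)
    ?_ ?_ ?_ ι
  · intro α β _ e ih f
    let _ := Fintype.ofEquiv β e.symm
    calc ∑' n : β → κ, ∏ b, f b (n b)
        = ∑' m : α → κ, ∏ a, f (e a) (m a) := by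
          rw [← (e.arrowCongr (Equiv.refl κ)).tsum_eq]
          exact tsum_congr fun m => (Fintype.prod_equiv e _ _ fun a => by simp).symm
      _ = ∏ b, ∑' j, f b j := by
          rw [ih]; exact Fintype.prod_equiv e _ _ fun _ => rfl
  · simp
  · intro α _ ih f
    rw [← (Equiv.piOptionEquivProd (β := fun _ => κ)).symm.tsum_eq, ENNReal.tsum_prod']
    simp [Fintype.prod_option, ENNReal.tsum_mul_left, ENNReal.tsum_mul_right, ih]

theorem Real.one_sub_exp_pos {x : ℝ} (hx : x < 0) : 0 < 1 - exp x :=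
  sub_pos.2 (exp_lt_one_iff.2 hx)

theorem ENNReal.ofReal_inv_one_sub_exp {c : ℝ} (hc : c < 0) :
    ENNReal.ofReal (1 - exp c)⁻¹ = ∑' j : ℕ, ENNReal.ofReal (exp c) ^ j := by
  rw [ENNReal.tsum_geometric, ENNReal.ofReal_inv_of_pos (one_sub_exp_pos hc),
    ENNReal.ofReal_sub _ (exp_nonneg c), ENNReal.ofReal_one]

section LowerBound

variable {ι : Type*} [Fintype ι] [DecidableEq ι]

noncomputable def fbetaLowerBound (a : ι → ℝ) (i₀ : ι) (β : ℝ) : ℝ :=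
  (1 - exp ((1 - β) * a i₀))⁻¹ * ∏ i ∈ Finset.univ.erase i₀, (1 - exp (-(β * a i)))⁻¹

theorem ofReal_fbetaLowerBound_le_tsum {a : ι → ℝ} (ha : ∀ i, 0 < a i) {i₀ : ι}
    {N : (ι → ℕ) → ℝ} (hN : ∀ n, exp (n i₀ * a i₀) ≤ N n) {β : ℝ} (hβ : 1 < β) :
    ENNReal.ofReal (fbetaLowerBound a i₀ β) ≤
      ∑' n : ι → ℕ, ENNReal.ofReal (exp (-(β * ∑ i, a i * n i)) * N n) := by
  -- exponents of the geometric series; the extra `a i₀` is paid for by `hN`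
  set c : ι → ℝ := fun i => -(β * a i) + if i = i₀ then a i₀ else 0 with hc_def
  have hc : ∀ i, c i < 0 := by
    intro i
    rcases eq_or_ne i i₀ with rfl | hi
    · simp only [hc_def, if_true]; nlinarith [ha i]
    · simp only [hc_def, if_neg hi]; nlinarith [ha i]
  have hsum (n : ι → ℕ) : ∑ i, n i * c i = -(β * ∑ i, a i * n i) + n i₀ * a i₀ := by
    simp only [hc_def, mul_add, Finset.sum_add_distrib, mul_ite, mul_zero, Finset.sum_ite_eq',
      Finset.mem_univ, if_true, Finset.mul_sum, ← Finset.sum_neg_distrib]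
    exact congrArg₂ _ (Finset.sum_congr rfl fun _ _ => by ring) rfl
  calc ENNReal.ofReal (fbetaLowerBound a i₀ β)
      = ∏ i, ENNReal.ofReal (1 - exp (c i))⁻¹ := by
        rw [← ENNReal.ofReal_prod_of_nonneg fun i _ => inv_nonneg.2 (one_sub_exp_pos (hc i)).le,
          ← Finset.mul_prod_erase _ _ (Finset.mem_univ i₀), fbetaLowerBound]
        congr 2
        · simp only [hc_def, if_true]; ring_nf
        · refine Finset.prod_congr rfl fun i hi => ?_
          simp [hc_def, Finset.ne_of_mem_erase hi]
    _ = ∑' n : ι → ℕ, ∏ i, ENNReal.ofReal (exp (c i)) ^ n i := by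
        simp only [ENNReal.ofReal_inv_one_sub_exp (hc _), ENNReal.tsum_pi_prod]
    _ ≤ _ := by
        refine ENNReal.tsum_le_tsum fun n => ?_
        have hexp : ∏ i, ENNReal.ofReal (exp (c i)) ^ n i =
            ENNReal.ofReal (exp (∑ i, n i * c i)) := by
          simp_rw [← ENNReal.ofReal_pow (exp_nonneg _), ← exp_nat_mul]
          rw [← ENNReal.ofReal_prod_of_nonneg fun _ _ => exp_nonneg _, ← exp_sum]
        rw [hexp, hsum, exp_add]
        gcongr
        exact hN n

theorem tendsto_fbetaLowerBound {a : ι → ℝ} (ha : ∀ i, 0 < a i) (i₀ : ι) :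
    Tendsto (fbetaLowerBound a i₀) (𝓝[>] 1) atTop := by
  have hneg : ∀ᶠ β in 𝓝[>] 1, (1 - β) * a i₀ < 0 := by
    filter_upwards [self_mem_nhdsWithin] with β (hβ : 1 < β)
    exact mul_neg_of_neg_of_pos (by linarith) (ha i₀)
  have hfirst : Tendsto (fun β => (1 - exp ((1 - β) * a i₀))⁻¹) (𝓝[>] 1) atTop := by
    refine Tendsto.inv_tendsto_nhdsGT_zero (tendsto_nhdsWithin_iff.2 ⟨?_, ?_⟩)
    · have : Continuous fun β => 1 - exp ((1 - β) * a i₀) := by fun_prop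
      simpa using (this.tendsto 1).mono_left nhdsWithin_le_nhds
    · exact hneg.mono fun β => one_sub_exp_pos
  -- the remaining factors are all at least 1
  refine tendsto_atTop_mono' _ ?_ hfirst
  filter_upwards [hneg, self_mem_nhdsWithin] with β hβ (hβ1 : 1 < β)
  have hpos : ∀ i, 0 < β * a i := fun i => mul_pos (by linarith) (ha i)
  refine le_mul_of_one_le_right (inv_nonneg.2 (one_sub_exp_pos hβ).le)
    (Finset.one_le_prod fun i _ => ?_)
  exact (one_le_inv₀ (one_sub_exp_pos (neg_lt_zero.2 (hpos i)))).2 (sub_le_self _ (exp_nonneg _))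

end LowerBound

theorem fbeta_tendsto_top_general {Z : Type*} [TopologicalSpace Z] [CompactSpace Z] [T2Space Z]
    {k : ℕ} [NeZero k] (h : Fin k → Z → Z)
    (hlh : ∀ i, IsLocalHomeomorph (h i))
    (hsurj : ∀ i, Function.Surjective (h i))
    (hpos : ∀ i, 0 < betaC (h i))
    (u : Z)
    (hu : ∀ d : ℕ, Real.exp (d * betaC (h 0)) ≤ (Nat.card ((h 0)^[d] ⁻¹' {u}) : ℝ)) :
    (∀ β : ℝ, 1 < β →
      ENNReal.ofReal
          ((1 - Real.exp ((1 - β) * betaC (h 0)))⁻¹ *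
            ∏ i ∈ Finset.univ.erase (0 : Fin k),
              (1 - Real.exp (-(β * betaC (h i))))⁻¹)
        ≤ ∑' n : Fin k → ℕ,
            ENNReal.ofReal
              (Real.exp (-(β * ∑ i, betaC (h i) * n i)) *
                (Nat.card ((compIter h n) ⁻¹' {u}) : ℝ))) ∧
    Filter.Tendsto
      (fun β : ℝ =>
        ∑' n : Fin k → ℕ,
          ENNReal.ofReal
            (Real.exp (-(β * ∑ i, betaC (h i) * n i)) *
              (Nat.card ((compIter h n) ⁻¹' {u}) : ℝ)))
      (nhdsWithin 1 (Set.Ioi 1)) (nhds ⊤) := by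
  have hcard (n : Fin k → ℕ) : exp (n 0 * betaC (h 0)) ≤ Nat.card (compIter h n ⁻¹' {u}) :=
    (hu (n 0)).trans (mod_cast card_preimage_iterate_le_card_preimage_compIter hlh hsurj n u)
  have hbound (β : ℝ) (hβ : 1 < β) := ofReal_fbetaLowerBound_le_tsum hpos hcard hβ
  refine ⟨hbound, ?_⟩
  exact tendsto_nhds_top_mono
    (ENNReal.tendsto_ofReal_atTop.comp (tendsto_fbetaLowerBound hpos 0))
    (eventually_nhdsWithin_of_forall hbound)

/-- for the preferred dynamics `r = (β_{c 1}, …, β_{c k})` and a point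
`u` with `|h_1^{-d}(u)| ≥ e^{d β_{c 1}}` for all `d`, the sum
`f_β(u) = ∑_{n ∈ ℕ^k} e^{-β r·n} |h^{-n}(u)|` (in `[0,∞]`) is bounded below by
`(1 - e^{(1-β)β_{c 1}})⁻¹ ∏_{i≥2} (1 - e^{-β β_{c i}})⁻¹`, and hence tends to `∞`
as `β ↓ 1`. -/
theorem fbeta_tendsto_top {Z : Type*} [TopologicalSpace Z] [CompactSpace Z] [T2Space Z]
    {k : ℕ} [NeZero k] (h : Fin k → Z → Z)
    (hlh : ∀ i, IsLocalHomeomorph (h i))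
    (hsurj : ∀ i, Function.Surjective (h i))
    (hcomm : ∀ i j : Fin k, (h i) ∘ (h j) = (h j) ∘ (h i))
    (hpos : ∀ i, 0 < betaC (h i))
    (u : Z)
    (hu : ∀ d : ℕ, Real.exp (d * betaC (h 0)) ≤ (Nat.card ((h 0)^[d] ⁻¹' {u}) : ℝ)) :
    (∀ β : ℝ, 1 < β →
      ENNReal.ofReal
          ((1 - Real.exp ((1 - β) * betaC (h 0)))⁻¹ *
            ∏ i ∈ Finset.univ.erase (0 : Fin k),
              (1 - Real.exp (-(β * betaC (h i))))⁻¹)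
        ≤ ∑' n : Fin k → ℕ,
            ENNReal.ofReal
              (Real.exp (-(β * ∑ i, betaC (h i) * n i)) *
                (Nat.card ((compIter h n) ⁻¹' {u}) : ℝ))) ∧
    Filter.Tendsto
      (fun β : ℝ =>
        ∑' n : Fin k → ℕ,
          ENNReal.ofReal
            (Real.exp (-(β * ∑ i, betaC (h i) * n i)) *
              (Nat.card ((compIter h n) ⁻¹' {u}) : ℝ)))
      (nhdsWithin 1 (Set.Ioi 1)) (nhds ⊤) :=
  fbeta_tendsto_top_general h hlh hsurj hpos u hu
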